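/- Let F be a field and let (u₁ₙ), (u₂ₙ) be sequences of nonzero elements of F satisfying u₁,ₙ₊₁·u₁,ₙ = u₁,ₙ·u₂,ₙ + u₂,ₙ + 1 and u₂,ₙ₊₁·u₁,ₙ·u₂,ₙ = u₂,ₙ + 1 for all n (the reduced A₃ cluster map (u₁,u₂) ↦ ((u₁u₂+u₂+1)/u₁, (u₂+1)/(u₁u₂))). Then the orbit is periodic with period 3: u₁,ₙ₊₃ = u₁,ₙ and u₂,ₙ₊₃ = u₂,ₙ for all n. -/
import Mathlib


/-- The reduced A₃ cluster map
`(u₁,u₂) ↦ ((u₁u₂+u₂+1)/u₁, (u₂+1)/(u₁u₂))` is periodic with period 3 on any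
orbit of nonzero elements of a field. -/
theorem reduced_a3_cluster_map_period_three {F : Type*} [Field F]
    (u₁ u₂ : ℕ → F)
    (hu₁ : ∀ n, u₁ n ≠ 0) (hu₂ : ∀ n, u₂ n ≠ 0)
    (h₁ : ∀ n, u₁ (n + 1) * u₁ n = u₁ n * u₂ n + u₂ n + 1)
    (h₂ : ∀ n, u₂ (n + 1) * (u₁ n * u₂ n) = u₂ n + 1) :
    ∀ n, u₁ (n + 3) = u₁ n ∧ u₂ (n + 3) = u₂ n := by
  intro n
  have ha := hu₁ n
  have hb := hu₂ n
  have hx1 := hu₁ (n + 1)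
  have hx2 := hu₂ (n + 1)
  have hy1 := hu₁ (n + 2)
  have hy2 := hu₂ (n + 2)
  have e1 := h₁ n
  have e2 := h₂ n
  have e3 := h₁ (n + 1)
  have e4 := h₂ (n + 1)
  have e5 := h₁ (n + 2)
  have e6 := h₂ (n + 2)
  have r2 : n + 1 + 1 = n + 2 := rfl
  have r3 : n + 2 + 1 = n + 3 := rfl
  rw [r2] at e3 e4
  rw [r3] at e5 e6
  -- u₂ n + 1 ≠ 0
  have hb1 : u₂ n + 1 ≠ 0 := e2 ▸ mul_ne_zero hx2 (mul_ne_zero ha hb)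
  -- closed form for step 2, first coordinate
  have g1 : u₁ (n + 2) * (u₁ n * u₂ n) = u₁ n + u₂ n + 1 := by
    apply mul_left_cancel₀ (mul_ne_zero hx1 ha)
    linear_combination (u₁ n ^ 2 * u₂ n) * e3 + (u₁ n * u₁ (n + 1) + u₁ n) * e2 - u₁ n * e1
  -- closed form for step 2, second coordinate
  have g2 : u₂ (n + 2) * (u₂ n + 1) = u₁ n := by
    apply mul_left_cancel₀ (mul_ne_zero hx1 hx2)
    linear_combination (u₂ n + 1) * e4 - u₂ (n + 1) * e1 - e2
  have ha1 : u₁ n + u₂ n + 1 ≠ 0 := g1 ▸ mul_ne_zero hy1 (mul_ne_zero ha hb)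
  constructor
  · apply mul_left_cancel₀
      (mul_ne_zero (mul_ne_zero hy1 (mul_ne_zero ha hb)) hb1)
    linear_combination (u₁ n * u₂ n * (u₂ n + 1)) * e5
      + (u₂ (n + 2) * (u₂ n + 1) - u₁ n * (u₂ n + 1)) * g1
      + (u₁ n + u₂ n + 1 + u₁ n * u₂ n) * g2
  · apply mul_left_cancel₀ (mul_ne_zero ha ha1)
    linear_combination (u₁ n * u₂ n * (u₂ n + 1)) * e6
      - (u₂ (n + 3) * u₂ (n + 2) * (u₂ n + 1)) * g1
      - ((u₁ n + u₂ n + 1) * u₂ (n + 3)) * g2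
      + (u₁ n * u₂ n) * g2
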